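/- arXiv:2311.11936 — 2 statements merged into one kernel-verified Lean document; each statement's English description precedes it below -/
import Mathlib

section
/- Let B be a strict bicategory equipped with a Lawvere 2-weight (W₁, W₂). Then the associated interleaving distance d is an extended pseudometric on the objects of B: d(a,a) = 0 for every object a, d(a,b) = d(b,a) for all objects a, b, and d(a,c) ≤ d(a,b) + d(b,c) for all objects a, b, c. -/
open CategoryTheory
open scoped ENNReal Bicategory

variable {B : Type*} [Bicategory B]

/-- The set of candidate interleaving costs between two objects of a (strict) bicategory
equipped with a Lawvere 2-weight `(W₁, W₂)`: an element of this set is the cost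
`max (max (W₁ g) (W₁ h)) (max (W₂ α) (W₂ β))` of an interleaving `(g, h, α, β)` of `a` and `b`,
where `g : a ⟶ b`, `h : b ⟶ a`, `α : 𝟙 a ⟶ g ≫ h` and `β : 𝟙 b ⟶ h ≫ g`. -/
def interleavingCosts (W₁ : ∀ {a b : B}, (a ⟶ b) → ℝ≥0∞)
    (W₂ : ∀ {a b : B} {f g : a ⟶ b}, (f ⟶ g) → ℝ≥0∞) (a b : B) : Set ℝ≥0∞ :=
  {e | ∃ (g : a ⟶ b) (h : b ⟶ a) (α : 𝟙 a ⟶ g ≫ h) (β : 𝟙 b ⟶ h ≫ g),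
    e = max (max (W₁ g) (W₁ h)) (max (W₂ α) (W₂ β))}

/-- The interleaving distance on the objects of a (strict) bicategory equipped with a
Lawvere 2-weight. -/
noncomputable def interleavingDist (W₁ : ∀ {a b : B}, (a ⟶ b) → ℝ≥0∞)
    (W₂ : ∀ {a b : B} {f g : a ⟶ b}, (f ⟶ g) → ℝ≥0∞) (a b : B) : ℝ≥0∞ :=
  sInf (interleavingCosts W₁ W₂ a b)

/-- The interleaving distance associated to a Lawvere 2-weight on a strict
bicategory is an extended pseudometric on the objects. -/
theorem stmt_1 {B : Type*} [Bicategory B] [Bicategory.Strict B]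
    (W₁ : ∀ {a b : B}, (a ⟶ b) → ℝ≥0∞)
    (W₂ : ∀ {a b : B} {f g : a ⟶ b}, (f ⟶ g) → ℝ≥0∞)
    (hW₁_id : ∀ a : B, W₁ (𝟙 a) = 0)
    (hW₁_comp : ∀ {a b c : B} (f : a ⟶ b) (g : b ⟶ c), W₁ (f ≫ g) ≤ W₁ f + W₁ g)
    (hW₂_id : ∀ {a b : B} (f : a ⟶ b), W₂ (𝟙 f) = 0)
    (hW₂_vcomp : ∀ {a b : B} {f g h : a ⟶ b} (η : f ⟶ g) (θ : g ⟶ h),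
      W₂ (η ≫ θ) ≤ W₂ η + W₂ θ)
    (hW₂_hcomp : ∀ {a b c : B} {f g : a ⟶ b} {h k : b ⟶ c} (η : f ⟶ g) (θ : h ⟶ k),
      W₂ ((η ▷ h) ≫ (g ◁ θ)) ≤ W₂ η + W₂ θ) :
    (∀ a : B, interleavingDist W₁ W₂ a a = 0) ∧
    (∀ a b : B, interleavingDist W₁ W₂ a b = interleavingDist W₁ W₂ b a) ∧
    (∀ a b c : B,
      interleavingDist W₁ W₂ a c ≤ interleavingDist W₁ W₂ a b + interleavingDist W₁ W₂ b c) := by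
    -- W₂ of an eqToHom 2-morphism is zero
  have hEq : ∀ {a b : B} {f g : a ⟶ b} (p : f = g), W₂ (eqToHom p) = 0 := by
    intro a b f g p; subst p; simpa using hW₂_id f
  -- whiskering bounds
  have hwhL : ∀ {a b c : B} (f : a ⟶ b) {h k : b ⟶ c} (θ : h ⟶ k), W₂ (f ◁ θ) ≤ W₂ θ := by
    intro a b c f h k θ
    have := hW₂_hcomp (𝟙 f) θ
    simpa [hW₂_id] using this
  have hwhR : ∀ {a b c : B} {f g : a ⟶ b} (η : f ⟶ g) (h : b ⟶ c), W₂ (η ▷ h) ≤ W₂ η := by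
    intro a b c f g η h
    have := hW₂_hcomp η (𝟙 h)
    simpa [hW₂_id] using this
  refine ⟨?_, ?_, ?_⟩
  · -- reflexivity
    intro a
    have h0 : (0 : ℝ≥0∞) ∈ interleavingCosts W₁ W₂ a a := by
      refine ⟨𝟙 a, 𝟙 a, eqToHom (by simp), eqToHom (by simp), ?_⟩
      simp [hW₁_id, hEq]
    exact le_antisymm (sInf_le h0) zero_le
  · -- symmetry
    intro a b
    have hset : ∀ (a b : B), interleavingCosts W₁ W₂ a b ⊆ interleavingCosts W₁ W₂ b a := by
      rintro a b e ⟨g, h, α, β, rfl⟩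
      exact ⟨h, g, β, α, by rw [max_comm (W₁ g) (W₁ h), max_comm (W₂ α) (W₂ β)]⟩
    simp only [interleavingDist]
    rw [Set.Subset.antisymm (hset a b) (hset b a)]
  · -- triangle inequality
    intro a b c
    have key : ∀ x ∈ interleavingCosts W₁ W₂ a b, ∀ y ∈ interleavingCosts W₁ W₂ b c,
        interleavingDist W₁ W₂ a c ≤ x + y := by
      rintro x ⟨g₁, h₁, α₁, β₁, rfl⟩ y ⟨g₂, h₂, α₂, β₂, rfl⟩
      set x := max (max (W₁ g₁) (W₁ h₁)) (max (W₂ α₁) (W₂ β₁)) with hx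
      set y := max (max (W₁ g₂) (W₁ h₂)) (max (W₂ α₂) (W₂ β₂)) with hy
      have e₁ : g₁ ≫ h₁ = g₁ ≫ 𝟙 b ≫ h₁ := by simp
      have e₂ : g₁ ≫ (g₂ ≫ h₂) ≫ h₁ = (g₁ ≫ g₂) ≫ h₂ ≫ h₁ := by simp
      have e₃ : h₂ ≫ g₂ = h₂ ≫ 𝟙 b ≫ g₂ := by simp
      have e₄ : h₂ ≫ (h₁ ≫ g₁) ≫ g₂ = (h₂ ≫ h₁) ≫ g₁ ≫ g₂ := by simp
      let α : 𝟙 a ⟶ (g₁ ≫ g₂) ≫ h₂ ≫ h₁ :=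
        α₁ ≫ eqToHom e₁ ≫ (g₁ ◁ (α₂ ▷ h₁)) ≫ eqToHom e₂
      let β : 𝟙 c ⟶ (h₂ ≫ h₁) ≫ g₁ ≫ g₂ :=
        β₂ ≫ eqToHom e₃ ≫ (h₂ ◁ (β₁ ▷ g₂)) ≫ eqToHom e₄
      have hmem : max (max (W₁ (g₁ ≫ g₂)) (W₁ (h₂ ≫ h₁))) (max (W₂ α) (W₂ β))
          ∈ interleavingCosts W₁ W₂ a c := ⟨g₁ ≫ g₂, h₂ ≫ h₁, α, β, rfl⟩
      refine le_trans (sInf_le hmem) ?_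
      have hg1 : W₁ g₁ ≤ x := le_max_of_le_left (le_max_left _ _)
      have hh1 : W₁ h₁ ≤ x := le_max_of_le_left (le_max_right _ _)
      have ha1 : W₂ α₁ ≤ x := le_max_of_le_right (le_max_left _ _)
      have hb1 : W₂ β₁ ≤ x := le_max_of_le_right (le_max_right _ _)
      have hg2 : W₁ g₂ ≤ y := le_max_of_le_left (le_max_left _ _)
      have hh2 : W₁ h₂ ≤ y := le_max_of_le_left (le_max_right _ _)
      have ha2 : W₂ α₂ ≤ y := le_max_of_le_right (le_max_left _ _)
      have hb2 : W₂ β₂ ≤ y := le_max_of_le_right (le_max_right _ _)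
      have hα : W₂ α ≤ x + y := by
        calc W₂ α ≤ W₂ α₁ + W₂ (eqToHom e₁ ≫ (g₁ ◁ (α₂ ▷ h₁)) ≫ eqToHom e₂) :=
              hW₂_vcomp _ _
          _ ≤ W₂ α₁ + (W₂ (eqToHom e₁) + W₂ ((g₁ ◁ (α₂ ▷ h₁)) ≫ eqToHom e₂)) :=
              add_le_add_right (hW₂_vcomp _ _) _
          _ ≤ W₂ α₁ + (W₂ (eqToHom e₁) + (W₂ (g₁ ◁ (α₂ ▷ h₁)) + W₂ (eqToHom e₂))) :=
              add_le_add_right (add_le_add_right (hW₂_vcomp _ _) _) _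
          _ ≤ W₂ α₁ + (0 + (W₂ α₂ + 0)) := by
              gcongr
              · exact le_of_eq (hEq e₁)
              · exact le_trans (hwhL _ _) (hwhR _ _)
              · exact le_of_eq (hEq e₂)
          _ = W₂ α₁ + W₂ α₂ := by simp
          _ ≤ x + y := add_le_add ha1 ha2
      have hβ : W₂ β ≤ x + y := by
        calc W₂ β ≤ W₂ β₂ + W₂ (eqToHom e₃ ≫ (h₂ ◁ (β₁ ▷ g₂)) ≫ eqToHom e₄) :=
              hW₂_vcomp _ _
          _ ≤ W₂ β₂ + (W₂ (eqToHom e₃) + W₂ ((h₂ ◁ (β₁ ▷ g₂)) ≫ eqToHom e₄)) :=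
              add_le_add_right (hW₂_vcomp _ _) _
          _ ≤ W₂ β₂ + (W₂ (eqToHom e₃) + (W₂ (h₂ ◁ (β₁ ▷ g₂)) + W₂ (eqToHom e₄))) :=
              add_le_add_right (add_le_add_right (hW₂_vcomp _ _) _) _
          _ ≤ W₂ β₂ + (0 + (W₂ β₁ + 0)) := by
              gcongr
              · exact le_of_eq (hEq e₃)
              · exact le_trans (hwhL _ _) (hwhR _ _)
              · exact le_of_eq (hEq e₄)
          _ = W₂ β₂ + W₂ β₁ := by simp
          _ ≤ x + y := by rw [add_comm]; exact add_le_add hb1 hb2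
      refine max_le (max_le ?_ ?_) (max_le hα hβ)
      · exact le_trans (hW₁_comp _ _) (add_le_add hg1 hg2)
      · exact le_trans (hW₁_comp _ _) (by rw [add_comm]; exact add_le_add hh1 hh2)
    have : interleavingDist W₁ W₂ a b + interleavingDist W₁ W₂ b c =
        ⨅ x ∈ interleavingCosts W₁ W₂ a b, ⨅ y ∈ interleavingCosts W₁ W₂ b c, (x + y) := by
      simp only [interleavingDist, sInf_eq_iInf, ENNReal.iInf_add, ENNReal.add_iInf]
      exact iInf₂_comm _
    rw [this]
    exact le_iInf fun x => le_iInf fun hx => le_iInf fun y => le_iInf fun hy => key x hx y hy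
end

section
/- Let B and B' be strict bicategories equipped with Lawvere 2-weights (W₁, W₂) and (W₁', W₂') respectively, with associated interleaving distances d and d'. Let F be a pseudofunctor from B to B' such that: W₁'(F(f)) ≤ W₁(f) for every 1-morphism f of B; W₂'(F(η)) ≤ W₂(η) for every 2-morphism η of B; and the 2-weights of the structural 2-cells of F are all zero, i.e. W₂' of the components (and of the inverse components) of the isomorphisms F(𝟙_a) ≅ 𝟙_{F(a)} and F(f ≫ g) ≅ F(f) ≫ F(g) all vanish. Then for all objects a, b of B: d'(F(a), F(b)) ≤ d(a, b). -/
/-!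
`F` carries an interleaving `(g, h, α, β)` of `a` and `b` to one of `F a` and `F b`: the
1-morphisms are `F g`, `F h`, and the unit `α` becomes `F α` conjugated by the structural
isomorphisms `F (𝟙 a) ≅ 𝟙 (F a)` and `F (g ≫ h) ≅ F g ≫ F h`. These have weight zero, so
subadditivity of `W₂'` under vertical composition bounds the new unit's weight by that of `α`.
-/

open CategoryTheory
open scoped ENNReal Bicategory

namespace CategoryTheory.Pseudofunctor

variable {B B' : Type*} [Bicategory B] [Bicategory B'] (F : Pseudofunctor B B')

def mapIdToComp {a b : B} {g : a ⟶ b} {h : b ⟶ a} (α : 𝟙 a ⟶ g ≫ h) :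
    𝟙 (F.obj a) ⟶ F.map g ≫ F.map h :=
  (F.mapId a).inv ≫ F.map₂ α ≫ (F.mapComp g h).hom

theorem weight_mapIdToComp_le (W₂' : ∀ {a b : B'} {f g : a ⟶ b}, (f ⟶ g) → ℝ≥0∞)
    (hW₂'_vcomp : ∀ {a b : B'} {f g h : a ⟶ b} (η : f ⟶ g) (θ : g ⟶ h),
      W₂' (η ≫ θ) ≤ W₂' η + W₂' θ)
    {a b : B} {g : a ⟶ b} {h : b ⟶ a} (α : 𝟙 a ⟶ g ≫ h)
    (hFid_inv : W₂' (F.mapId a).inv = 0) (hFcomp_hom : W₂' (F.mapComp g h).hom = 0) :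
    W₂' (F.mapIdToComp α) ≤ W₂' (F.map₂ α) :=
  calc W₂' (F.mapIdToComp α)
      ≤ W₂' (F.mapId a).inv + (W₂' (F.map₂ α) + W₂' (F.mapComp g h).hom) :=
        (hW₂'_vcomp _ _).trans (add_le_add_right (hW₂'_vcomp _ _) _)
    _ = W₂' (F.map₂ α) := by rw [hFid_inv, hFcomp_hom, zero_add, add_zero]

end CategoryTheory.Pseudofunctor

theorem stmt_11_general {B : Type*} [Bicategory B]
    {B' : Type*} [Bicategory B']
    (W₁ : ∀ {a b : B}, (a ⟶ b) → ℝ≥0∞)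
    (W₂ : ∀ {a b : B} {f g : a ⟶ b}, (f ⟶ g) → ℝ≥0∞)
    (W₁' : ∀ {a b : B'}, (a ⟶ b) → ℝ≥0∞)
    (W₂' : ∀ {a b : B'} {f g : a ⟶ b}, (f ⟶ g) → ℝ≥0∞)
    -- `(W₁', W₂')` is a Lawvere 2-weight on `B'`
    (hW₂'_vcomp : ∀ {a b : B'} {f g h : a ⟶ b} (η : f ⟶ g) (θ : g ⟶ h),
      W₂' (η ≫ θ) ≤ W₂' η + W₂' θ)
    -- a weight non-increasing pseudofunctor whose structural 2-cells have weight zero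
    (F : Pseudofunctor B B')
    (hF₁ : ∀ {a b : B} (f : a ⟶ b), W₁' (F.map f) ≤ W₁ f)
    (hF₂ : ∀ {a b : B} {f g : a ⟶ b} (η : f ⟶ g), W₂' (F.map₂ η) ≤ W₂ η)
    (hFid_inv : ∀ a : B, W₂' (F.mapId a).inv = 0)
    (hFcomp_hom : ∀ {a b c : B} (f : a ⟶ b) (g : b ⟶ c), W₂' (F.mapComp f g).hom = 0) :
    ∀ a b : B, interleavingDist W₁' W₂' (F.obj a) (F.obj b) ≤ interleavingDist W₁ W₂ a b := by
  intro a b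
  refine le_sInf ?_
  rintro _ ⟨g, h, α, β, rfl⟩
  refine sInf_le_of_le ⟨F.map g, F.map h, F.mapIdToComp α, F.mapIdToComp β, rfl⟩ ?_
  have hα := (F.weight_mapIdToComp_le W₂' hW₂'_vcomp α (hFid_inv a) (hFcomp_hom g h)).trans
    (hF₂ α)
  have hβ := (F.weight_mapIdToComp_le W₂' hW₂'_vcomp β (hFid_inv b) (hFcomp_hom h g)).trans
    (hF₂ β)
  exact max_le_max (max_le_max (hF₁ g) (hF₁ h)) (max_le_max hα hβ)

/-- **stability.** A pseudofunctor between strict bicategories with Lawvere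
2-weights which does not increase the weights of 1- and 2-morphisms, and whose structural
2-cells all have 2-weight zero, is 1-Lipschitz for the induced interleaving distances. -/
theorem stmt_11 {B : Type*} [Bicategory B] [Bicategory.Strict B]
    {B' : Type*} [Bicategory B'] [Bicategory.Strict B']
    (W₁ : ∀ {a b : B}, (a ⟶ b) → ℝ≥0∞)
    (W₂ : ∀ {a b : B} {f g : a ⟶ b}, (f ⟶ g) → ℝ≥0∞)
    (W₁' : ∀ {a b : B'}, (a ⟶ b) → ℝ≥0∞)
    (W₂' : ∀ {a b : B'} {f g : a ⟶ b}, (f ⟶ g) → ℝ≥0∞)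
    -- `(W₁, W₂)` is a Lawvere 2-weight on `B`
    (hW₁_id : ∀ a : B, W₁ (𝟙 a) = 0)
    (hW₁_comp : ∀ {a b c : B} (f : a ⟶ b) (g : b ⟶ c), W₁ (f ≫ g) ≤ W₁ f + W₁ g)
    (hW₂_id : ∀ {a b : B} (f : a ⟶ b), W₂ (𝟙 f) = 0)
    (hW₂_vcomp : ∀ {a b : B} {f g h : a ⟶ b} (η : f ⟶ g) (θ : g ⟶ h),
      W₂ (η ≫ θ) ≤ W₂ η + W₂ θ)
    (hW₂_hcomp : ∀ {a b c : B} {f g : a ⟶ b} {h k : b ⟶ c} (η : f ⟶ g) (θ : h ⟶ k),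
      W₂ ((η ▷ h) ≫ (g ◁ θ)) ≤ W₂ η + W₂ θ)
    -- `(W₁', W₂')` is a Lawvere 2-weight on `B'`
    (hW₁'_id : ∀ a : B', W₁' (𝟙 a) = 0)
    (hW₁'_comp : ∀ {a b c : B'} (f : a ⟶ b) (g : b ⟶ c), W₁' (f ≫ g) ≤ W₁' f + W₁' g)
    (hW₂'_id : ∀ {a b : B'} (f : a ⟶ b), W₂' (𝟙 f) = 0)
    (hW₂'_vcomp : ∀ {a b : B'} {f g h : a ⟶ b} (η : f ⟶ g) (θ : g ⟶ h),
      W₂' (η ≫ θ) ≤ W₂' η + W₂' θ)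
    (hW₂'_hcomp : ∀ {a b c : B'} {f g : a ⟶ b} {h k : b ⟶ c} (η : f ⟶ g) (θ : h ⟶ k),
      W₂' ((η ▷ h) ≫ (g ◁ θ)) ≤ W₂' η + W₂' θ)
    -- a weight non-increasing pseudofunctor whose structural 2-cells have weight zero
    (F : Pseudofunctor B B')
    (hF₁ : ∀ {a b : B} (f : a ⟶ b), W₁' (F.map f) ≤ W₁ f)
    (hF₂ : ∀ {a b : B} {f g : a ⟶ b} (η : f ⟶ g), W₂' (F.map₂ η) ≤ W₂ η)
    (hFid_hom : ∀ a : B, W₂' (F.mapId a).hom = 0)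
    (hFid_inv : ∀ a : B, W₂' (F.mapId a).inv = 0)
    (hFcomp_hom : ∀ {a b c : B} (f : a ⟶ b) (g : b ⟶ c), W₂' (F.mapComp f g).hom = 0)
    (hFcomp_inv : ∀ {a b c : B} (f : a ⟶ b) (g : b ⟶ c), W₂' (F.mapComp f g).inv = 0) :
    ∀ a b : B, interleavingDist W₁' W₂' (F.obj a) (F.obj b) ≤ interleavingDist W₁ W₂ a b :=
  stmt_11_general W₁ W₂ W₁' W₂' hW₂'_vcomp F hF₁ hF₂ hFid_inv hFcomp_hom
end
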